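/- arXiv:2107.08130 — 2 statements merged into one kernel-verified Lean document; each statement's English description precedes it below -/
import Mathlib

section
/- Let G be a group and let P, K₀, K be subgroups of G such that K ≤ K₀, every element of K₀ normalizes K (i.e. k₀kk₀⁻¹ ∈ K for all k₀ ∈ K₀ and k ∈ K), and G = P·K₀ (every g ∈ G can be written as g = p·k₀ with p ∈ P and k₀ ∈ K₀). Let (V, ρ) be a representation of P on a complex vector space V. Let W be the ℂ-subspace of functions f : G → V satisfying f(p·g) = ρ(p)(f(g)) for all p ∈ P and g ∈ G, and let W_K be the subspace of those f ∈ W that additionally satisfy f(g·k) = f(g) for all g ∈ G and k ∈ K. Let V₀ = {v ∈ V : ρ(p)v = v for every p ∈ P with p ∈ K}. Then there exists a ℂ-linear isomorphism between W_K and the space of all functions from the double coset space P\G/K to V₀. In particular, if P\G/K is finite and V₀ is finite-dimensional, then dim W_K = |P\G/K| · dim V₀. -/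
/-!
Choose representatives `s q ∈ K₀` of the double cosets `q ∈ P\G/K`. Since `s q` normalizes `K`,
two decompositions `p₁ (s q) k₁ = p₂ (s q) k₂` differ by `p₂⁻¹ p₁ = s q (k₂ k₁⁻¹) (s q)⁻¹ ∈ P ∩ K`.
Hence a function `f` with `f (p g k) = ρ p (f g)` is determined by its values `f (s q)`, which
must be fixed by `P ∩ K`, and conversely every family of `P ∩ K`-fixed vectors `v q` extends by
`p (s q) k ↦ ρ p (v q)`, which is well defined by the same computation.
-/

open DoubleCoset

namespace Representation

variable {R G V : Type*} [CommSemiring R] [Group G] [AddCommMonoid V] [Module R V]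
  {P : Subgroup G} (ρ : Representation R P V) (K : Subgroup G)

def invariantsOn : Submodule R V where
  carrier := {v | ∀ p : P, (p : G) ∈ K → ρ p v = v}
  add_mem' hv hw p hp := by rw [map_add, hv p hp, hw p hp]
  zero_mem' _ _ := map_zero _
  smul_mem' c v hv p hp := by rw [map_smul, hv p hp]

def inducedInvariants : Submodule R (G → V) where
  carrier := {f | (∀ (p : P) (g : G), f ((p : G) * g) = ρ p (f g)) ∧
    ∀ (g : G) (k : K), f (g * (k : G)) = f g}
  add_mem' hf hf' :=
    ⟨fun p g => by simp [hf.1 p g, hf'.1 p g], fun g k => by simp [hf.2 g k, hf'.2 g k]⟩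
  zero_mem' := ⟨fun _ _ => (map_zero _).symm, fun _ _ => rfl⟩
  smul_mem' c f hf :=
    ⟨fun p g => by simp [hf.1 p g], fun g k => by simp [hf.2 g k]⟩

variable {ρ K}

theorem apply_eq_of_mul_mul_eq {r : G} (hr : r ∈ Subgroup.normalizer K) {v : V}
    (hv : v ∈ ρ.invariantsOn K) {p₁ p₂ : P} {k₁ k₂ : K}
    (h : (p₁ : G) * r * k₁ = p₂ * r * k₂) : ρ p₁ v = ρ p₂ v := by
  have hconj : ((p₂⁻¹ * p₁ : P) : G) = r * (k₂ * k₁⁻¹ : K) * r⁻¹ :=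
    calc ((p₂⁻¹ * p₁ : P) : G) = (p₂ : G)⁻¹ * (p₁ * r * k₁) * (k₁ : G)⁻¹ * r⁻¹ := by
          push_cast; group
      _ = r * (k₂ * k₁⁻¹ : K) * r⁻¹ := by rw [h]; push_cast; group
  have hK : ((p₂⁻¹ * p₁ : P) : G) ∈ K :=
    hconj ▸ (Subgroup.mem_normalizer_iff.mp hr _).mp (k₂ * k₁⁻¹).2
  rw [← mul_inv_cancel_left p₂ p₁, map_mul, Module.End.mul_apply, hv _ hK]

theorem mul_mul_apply_of_mem_inducedInvariants {f : G → V} (hf : f ∈ ρ.inducedInvariants K)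
    (p : P) (r : G) (k : K) : f (p * r * k) = ρ p (f r) := by
  rw [hf.2, hf.1]

theorem apply_mem_invariantsOn {f : G → V} (hf : f ∈ ρ.inducedInvariants K) {r : G}
    (hr : r ∈ Subgroup.normalizer K) : f r ∈ ρ.invariantsOn K := by
  intro p hp
  have hconj : r⁻¹ * p * r ∈ K := (Subgroup.mem_normalizer_iff''.mp hr p).mp hp
  calc ρ p (f r) = f (p * r) := (hf.1 p r).symm
    _ = f (r * (r⁻¹ * p * r)) := by group
    _ = f r := hf.2 r ⟨_, hconj⟩

section Extension

variable {s : Quotient (P : Set G) K → G}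

theorem exists_mul_section_mul_eq (hs : ∀ q, mk P K (s q) = q) (g : G) :
    ∃ p : P, ∃ k : K, (p : G) * s (mk P K g) * k = g := by
  obtain ⟨p, hp, k, hk, hg⟩ := (DoubleCoset.eq P K (s (mk P K g)) g).mp (hs _)
  exact ⟨⟨p, hp⟩, ⟨k, hk⟩, hg.symm⟩

variable (ρ) in
/-- The function `p (s q) k ↦ ρ p (h q)`. -/
noncomputable def extendFromSection (hs : ∀ q, mk P K (s q) = q)
    (h : Quotient (P : Set G) K → V) (g : G) : V :=
  ρ (exists_mul_section_mul_eq hs g).choose (h (mk P K g))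

variable (hs : ∀ q, mk P K (s q) = q) (hsK : ∀ q, s q ∈ Subgroup.normalizer K)
  {h : Quotient (P : Set G) K → V} (hh : ∀ q, h q ∈ ρ.invariantsOn K)
include hsK hh

theorem extendFromSection_eq {p : P} {q : Quotient (P : Set G) K} {k : K} {g : G}
    (hg : (p : G) * s q * k = g) : ρ.extendFromSection hs h g = ρ p (h q) := by
  obtain rfl : mk P K g = q :=
    ((DoubleCoset.eq P K _ _).mpr ⟨p, p.2, k, k.2, hg.symm⟩).symm.trans (hs q)
  obtain ⟨k₀, hk₀⟩ := (exists_mul_section_mul_eq hs g).choose_spec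
  exact apply_eq_of_mul_mul_eq (hsK _) (hh _) (hk₀.trans hg.symm)

theorem extendFromSection_section (q : Quotient (P : Set G) K) :
    ρ.extendFromSection hs h (s q) = h q := by
  rw [extendFromSection_eq hs hsK hh (p := 1) (q := q) (k := 1) (by simp), map_one,
    Module.End.one_apply]

theorem extendFromSection_mem_inducedInvariants :
    ρ.extendFromSection hs h ∈ ρ.inducedInvariants K := by
  refine ⟨fun p' g => ?_, fun g k' => ?_⟩
  all_goals
    obtain ⟨p, k, hg⟩ := exists_mul_section_mul_eq hs g
    generalize mk P K g = q at hg
    rw [extendFromSection_eq hs hsK hh hg]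
  · rw [extendFromSection_eq hs hsK hh (p := p' * p) (q := q) (k := k) (g := p' * g)
      (by rw [← hg]; push_cast; group), map_mul, Module.End.mul_apply]
  · exact extendFromSection_eq hs hsK hh (k := k * k') (g := g * k')
      (by rw [← hg]; push_cast; group)

end Extension

variable {s : Quotient (P : Set G) K → G}

variable (ρ) in
def restrictToSection (hsK : ∀ q, s q ∈ Subgroup.normalizer K) :
    ρ.inducedInvariants K →ₗ[R] (Quotient (P : Set G) K → ρ.invariantsOn K) where
  toFun f q := ⟨f.1 (s q), apply_mem_invariantsOn f.2 (hsK q)⟩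
  map_add' _ _ := rfl
  map_smul' _ _ := rfl

theorem restrictToSection_bijective (hs : ∀ q, mk P K (s q) = q)
    (hsK : ∀ q, s q ∈ Subgroup.normalizer K) : Function.Bijective (ρ.restrictToSection hsK) := by
  constructor
  · intro f₁ f₂ hf
    ext g
    obtain ⟨p, k, hg⟩ := exists_mul_section_mul_eq hs g
    have hq : f₁.1 (s (mk P K g)) = f₂.1 (s (mk P K g)) :=
      congrArg Subtype.val (congrFun hf (mk P K g))
    rw [← hg, mul_mul_apply_of_mem_inducedInvariants f₁.2,
      mul_mul_apply_of_mem_inducedInvariants f₂.2, hq]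
  · intro h
    have hh : ∀ q, (h q : V) ∈ ρ.invariantsOn K := fun q => (h q).2
    refine ⟨⟨_, extendFromSection_mem_inducedInvariants hs hsK hh⟩, ?_⟩
    funext q
    exact Subtype.ext (extendFromSection_section hs hsK hh q)

variable (ρ) in
noncomputable def inducedInvariantsEquiv (hs : ∀ q, mk P K (s q) = q)
    (hsK : ∀ q, s q ∈ Subgroup.normalizer K) :
    ρ.inducedInvariants K ≃ₗ[R] (Quotient (P : Set G) K → ρ.invariantsOn K) :=
  LinearEquiv.ofBijective _ (restrictToSection_bijective hs hsK)

end Representation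

theorem DoubleCoset.exists_mem_mk_eq_of_forall_eq_mul {G : Type*} [Group G]
    {P K L : Subgroup G} (hPL : ∀ g : G, ∃ p ∈ P, ∃ l ∈ L, g = p * l)
    (q : Quotient (P : Set G) K) : ∃ l ∈ L, mk P K l = q := by
  obtain ⟨p, hp, l, hl, hq⟩ := hPL q.out
  refine ⟨l, hl, ?_⟩
  rw [← out_eq' P K q, DoubleCoset.eq]
  exact ⟨p, hp, 1, K.one_mem, by rw [mul_one, hq]⟩

theorem stmt1_general (G : Type*) [Group G] (P K₀ K : Subgroup G)
    (hnorm : ∀ k₀ ∈ K₀, ∀ k ∈ K, k₀ * k * k₀⁻¹ ∈ K)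
    (hIwasawa : ∀ g : G, ∃ p ∈ P, ∃ k₀ ∈ K₀, g = p * k₀)
    (V : Type*) [AddCommGroup V] [Module ℂ V]
    (ρ : Representation ℂ P V)
    (W_K : Submodule ℂ (G → V))
    (hW_K : ∀ f : G → V, f ∈ W_K ↔
      ((∀ (p : P) (g : G), f ((p : G) * g) = ρ p (f g)) ∧
        ∀ (g : G) (k : K), f (g * (k : G)) = f g))
    (V₀ : Submodule ℂ V)
    (hV₀ : ∀ v : V, v ∈ V₀ ↔ ∀ p : P, (p : G) ∈ K → ρ p v = v) :
    Nonempty (W_K ≃ₗ[ℂ] (DoubleCoset.Quotient (P : Set G) (K : Set G) → V₀)) ∧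
      (Finite (DoubleCoset.Quotient (P : Set G) (K : Set G)) → FiniteDimensional ℂ V₀ →
        Module.finrank ℂ W_K =
          Nat.card (DoubleCoset.Quotient (P : Set G) (K : Set G)) * Module.finrank ℂ V₀) := by
  obtain rfl : W_K = ρ.inducedInvariants K := SetLike.ext hW_K
  obtain rfl : V₀ = ρ.invariantsOn K := SetLike.ext hV₀
  have hK₀ : K₀ ≤ Subgroup.normalizer K := Subgroup.le_normalizer_iff.mpr hnorm
  choose s hsK₀ hs using exists_mem_mk_eq_of_forall_eq_mul (K := K) hIwasawa
  let e := ρ.inducedInvariantsEquiv hs fun q => hK₀ (hsK₀ q)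
  refine ⟨⟨e⟩, fun _ _ => ?_⟩
  have := Fintype.ofFinite (Quotient (P : Set G) K)
  rw [e.finrank_eq, Module.finrank_pi_fintype, Finset.sum_const, Finset.card_univ, smul_eq_mul,
    Nat.card_eq_fintype_card]

/-- Let `G` be a group with subgroups `P`, `K₀`, `K` such that `K ≤ K₀`, every element of
`K₀` normalizes `K`, and `G = P·K₀`. Let `ρ` be a representation of `P` on a complex vector
space `V`. Let `W_K` be the space of functions `f : G → V` with `f(p·g) = ρ(p)(f(g))` and
`f(g·k) = f(g)`, and let `V₀` be the space of vectors fixed by every `p ∈ P ∩ K`. Then `W_K`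
is ℂ-linearly isomorphic to the space of functions `P\G/K → V₀`; in particular, if `P\G/K`
is finite and `V₀` is finite-dimensional, `dim W_K = |P\G/K| · dim V₀`. -/
theorem stmt1 (G : Type*) [Group G] (P K₀ K : Subgroup G)
    (hKK₀ : K ≤ K₀)
    (hnorm : ∀ k₀ ∈ K₀, ∀ k ∈ K, k₀ * k * k₀⁻¹ ∈ K)
    (hIwasawa : ∀ g : G, ∃ p ∈ P, ∃ k₀ ∈ K₀, g = p * k₀)
    (V : Type*) [AddCommGroup V] [Module ℂ V]
    (ρ : Representation ℂ P V)
    (W_K : Submodule ℂ (G → V))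
    (hW_K : ∀ f : G → V, f ∈ W_K ↔
      ((∀ (p : P) (g : G), f ((p : G) * g) = ρ p (f g)) ∧
        ∀ (g : G) (k : K), f (g * (k : G)) = f g))
    (V₀ : Submodule ℂ V)
    (hV₀ : ∀ v : V, v ∈ V₀ ↔ ∀ p : P, (p : G) ∈ K → ρ p v = v) :
    Nonempty (W_K ≃ₗ[ℂ] (DoubleCoset.Quotient (P : Set G) (K : Set G) → V₀)) ∧
      (Finite (DoubleCoset.Quotient (P : Set G) (K : Set G)) → FiniteDimensional ℂ V₀ →
        Module.finrank ℂ W_K =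
          Nat.card (DoubleCoset.Quotient (P : Set G) (K : Set G)) * Module.finrank ℂ V₀) :=
  stmt1_general G P K₀ K hnorm hIwasawa V ρ W_K hW_K V₀ hV₀
end

section
/- Let R be a finite commutative local ring with maximal ideal 𝔪, let q be the cardinality of the residue field R/𝔪, and suppose the cardinality of R is q^r with r ≥ 1. Then the elements g of GL₂(R) whose lower-left matrix entry (the (2,1) entry) is 0 form a subgroup B of GL₂(R), and the index of B in GL₂(R) equals q^{r−1}(q+1). -/
open IsLocalRing

section Aux

variable (R : Type*) [CommRing R]

/-- The Borel subgroup: upper triangular invertible matrices. -/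
def myBorel : Subgroup (GL (Fin 2) R) where
  carrier := {g | (g : Matrix (Fin 2) (Fin 2) R) 1 0 = 0}
  one_mem' := by simp [Matrix.one_apply]
  mul_mem' := by
    intro a b ha hb
    simp only [Set.mem_setOf_eq, Units.val_mul] at *
    rw [Matrix.mul_apply, Fin.sum_univ_two, ha, hb]
    ring
  inv_mem' := by
    intro a ha
    simp only [Set.mem_setOf_eq] at *
    rw [Matrix.coe_units_inv, Matrix.inv_def, Matrix.adjugate_fin_two]
    simp [ha]

noncomputable def borelEquiv : (myBorel R) ≃ Rˣ × Rˣ × R where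
  toFun g :=
    have hdet : IsUnit ((g.1 : Matrix (Fin 2) (Fin 2) R).det) := Matrix.isUnits_det_units g.1
    have h2 : IsUnit ((g.1 : Matrix (Fin 2) (Fin 2) R) 0 0 *
        (g.1 : Matrix (Fin 2) (Fin 2) R) 1 1) := by
      rwa [Matrix.det_fin_two, g.2, mul_zero, sub_zero] at hdet
    ⟨(isUnit_of_mul_isUnit_left h2).unit,
     (isUnit_of_mul_isUnit_right h2).unit,
     (g.1 : Matrix (Fin 2) (Fin 2) R) 0 1⟩
  invFun x :=
    ⟨⟨!![(x.1 : R), x.2.2; 0, (x.2.1 : R)],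
      !![((x.1⁻¹ : Rˣ) : R), -((x.1⁻¹ : Rˣ) : R) * x.2.2 * ((x.2.1⁻¹ : Rˣ) : R);
         0, ((x.2.1⁻¹ : Rˣ) : R)],
      by
        ext i j
        fin_cases i <;> fin_cases j <;>
          simp [Matrix.mul_apply, Fin.sum_univ_two, Matrix.one_apply] <;> ring_nf <;>
          simp [mul_comm, mul_assoc, mul_left_comm],
      by
        ext i j
        fin_cases i <;> fin_cases j <;>
          simp [Matrix.mul_apply, Fin.sum_univ_two, Matrix.one_apply] <;> ring_nf <;>
          simp [mul_comm, mul_assoc, mul_left_comm]⟩,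
     by simp [myBorel]⟩
  left_inv g := by
    apply Subtype.ext
    apply Matrix.GeneralLinearGroup.ext
    intro i j
    fin_cases i <;> fin_cases j <;> simp [IsUnit.unit_spec] <;> exact g.2.symm
  right_inv x := by
    refine Prod.ext (Units.ext ?_) (Prod.ext (Units.ext ?_) ?_) <;> simp [IsUnit.unit_spec]

/-- Units of a monoid are equivalent to the subtype of unit elements. -/
noncomputable def unitsEquivIsUnit' (M : Type*) [Monoid M] : Mˣ ≃ {x : M // IsUnit x} where
  toFun u := ⟨u, u.isUnit⟩
  invFun x := x.2.unit
  left_inv u := Units.ext u.isUnit.unit_spec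
  right_inv x := Subtype.ext x.2.unit_spec

variable [IsLocalRing R]

noncomputable abbrev redGL : GL (Fin 2) R →* GL (Fin 2) (ResidueField R) :=
  Matrix.GeneralLinearGroup.map (residue R)

lemma isUnit_of_residue {R : Type*} [CommRing R] [IsLocalRing R] {x : R}
    (h : IsUnit (residue R x)) : IsUnit x := by
  by_contra hx
  rw [← mem_nonunits_iff, ← mem_maximalIdeal] at hx
  rw [show residue R x = 0 from Ideal.Quotient.eq_zero_iff_mem.2 hx] at h
  exact h.ne_zero rfl

lemma redGL_surjective : Function.Surjective (redGL R) := by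
  intro h
  choose M hM using fun i j => Ideal.Quotient.mk_surjective (I := maximalIdeal R)
    ((h : Matrix (Fin 2) (Fin 2) (ResidueField R)) i j)
  have hmap : (Matrix.of M).map (residue R) = (h : Matrix (Fin 2) (Fin 2) (ResidueField R)) := by
    ext i j; exact hM i j
  have hdet : IsUnit (Matrix.of M).det := by
    apply isUnit_of_residue
    rw [RingHom.map_det, RingHom.mapMatrix_apply, hmap]
    exact Matrix.isUnits_det_units h
  refine ⟨Matrix.GeneralLinearGroup.mk'' (Matrix.of M) hdet, ?_⟩
  apply Matrix.GeneralLinearGroup.ext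
  intro i j
  rw [Matrix.GeneralLinearGroup.map_apply]
  exact hM i j

noncomputable def kerEquiv : (redGL R).ker ≃ (Fin 2 → Fin 2 → maximalIdeal R) where
  toFun g i j := ⟨(g.1 : Matrix (Fin 2) (Fin 2) R) i j - (1 : Matrix (Fin 2) (Fin 2) R) i j, by
    rw [← Ideal.Quotient.eq_zero_iff_mem]
    have hg : redGL R g.1 = 1 := g.2
    have : residue R ((g.1 : Matrix (Fin 2) (Fin 2) R) i j) =
        (1 : Matrix (Fin 2) (Fin 2) (ResidueField R)) i j := by
      rw [← Matrix.GeneralLinearGroup.map_apply (residue R) i j g.1, hg]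
      rfl
    rw [map_sub]
    show residue R _ - residue R _ = 0
    rw [this]
    rcases eq_or_ne i j with h | h <;> simp [Matrix.one_apply, h]⟩
  invFun M :=
    have hdet : IsUnit (Matrix.det ((1 : Matrix (Fin 2) (Fin 2) R) + Matrix.of fun i j => (M i j : R))) := by
      apply isUnit_of_residue
      rw [RingHom.map_det]
      have : (residue R).mapMatrix ((1 : Matrix (Fin 2) (Fin 2) R) + Matrix.of fun i j => (M i j : R)) = 1 := by
        ext i j
        simp only [RingHom.mapMatrix_apply, Matrix.map_apply, Matrix.add_apply, map_add,
          Matrix.of_apply]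
        rw [show residue R (M i j : R) = 0 from Ideal.Quotient.eq_zero_iff_mem.2 (M i j).2]
        rcases eq_or_ne i j with h | h <;> simp [Matrix.one_apply, h]
      rw [this]
      simp
    ⟨Matrix.GeneralLinearGroup.mk'' _ hdet, by
      rw [MonoidHom.mem_ker]
      apply Matrix.GeneralLinearGroup.ext
      intro i j
      rw [Matrix.GeneralLinearGroup.map_apply]
      show residue R (((1 : Matrix (Fin 2) (Fin 2) R) + Matrix.of fun i j => (M i j : R)) i j) = _
      simp only [Matrix.add_apply, map_add, Matrix.of_apply]
      rw [show residue R (M i j : R) = 0 from Ideal.Quotient.eq_zero_iff_mem.2 (M i j).2]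
      rcases eq_or_ne i j with h | h <;> simp [Matrix.one_apply, h]⟩
  left_inv g := by
    apply Subtype.ext
    apply Matrix.GeneralLinearGroup.ext
    intro i j
    show ((1 : Matrix (Fin 2) (Fin 2) R) + _) i j = _
    simp [Matrix.add_apply]
  right_inv M := by
    funext i j
    apply Subtype.ext
    show (((1 : Matrix (Fin 2) (Fin 2) R) + Matrix.of fun i j => (M i j : R)) i j) - _ = _
    simp [Matrix.add_apply]

end Aux

/-- Let `R` be a finite commutative local ring with residue field of cardinality `q` and
`|R| = q^r`, `r ≥ 1`. Then the matrices in `GL₂(R)` with lower-left entry `0` form a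
subgroup `B` of index `q^(r-1) * (q+1)`. -/
theorem stmt2 (R : Type*) [CommRing R] [IsLocalRing R] [Fintype R]
    (q r : ℕ) (hq : q = Nat.card (IsLocalRing.ResidueField R))
    (hR : Nat.card R = q ^ r) (hr : 1 ≤ r) :
    ∃ B : Subgroup (GL (Fin 2) R),
      (∀ g : GL (Fin 2) R, g ∈ B ↔ (g : Matrix (Fin 2) (Fin 2) R) 1 0 = 0) ∧
      B.index = q ^ (r - 1) * (q + 1) := by
  classical
  refine ⟨myBorel R, fun g => Iff.rfl, ?_⟩
  -- notation
  obtain ⟨t, rfl⟩ : ∃ t, r = t + 1 := ⟨r - 1, by omega⟩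
  simp only [Nat.add_sub_cancel]
  have : Finite (ResidueField R) := Finite.of_surjective (residue R) Ideal.Quotient.mk_surjective
  have : Fintype (ResidueField R) := Fintype.ofFinite _
  have hqcard : q = Fintype.card (ResidueField R) := by
    rw [hq, Nat.card_eq_fintype_card]
  have hq1 : 1 ≤ q := by rw [hqcard]; exact Fintype.card_pos
  obtain ⟨d, hd⟩ : ∃ d, q = d + 1 := ⟨q - 1, by omega⟩
  -- cardinality of the maximal ideal
  have hm : Nat.card R = q * Nat.card (maximalIdeal R) := by
    have h := Submodule.card_eq_card_quotient_mul_card (maximalIdeal R)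
    rw [show Nat.card (R ⧸ maximalIdeal R) = q from hq.symm] at h
    rw [h, Nat.mul_comm]
  have hmcard : Nat.card (maximalIdeal R) = q ^ t := by
    have : q * Nat.card (maximalIdeal R) = q * q ^ t := by
      rw [← hm, hR, pow_succ, mul_comm]
    exact Nat.eq_of_mul_eq_mul_left (by omega) this
  -- cardinality of the units
  have hunits : Nat.card Rˣ = q ^ t * d := by
    have h1 : Nat.card Rˣ = Fintype.card {x : R // IsUnit x} := by
      rw [Nat.card_congr (unitsEquivIsUnit' R), Nat.card_eq_fintype_card]
    have h2 : Fintype.card {x : R // ¬ IsUnit x} =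
        Fintype.card R - Fintype.card {x : R // IsUnit x} :=
      Fintype.card_subtype_compl _
    have h3 : Nat.card (maximalIdeal R) = Fintype.card {x : R // ¬ IsUnit x} := by
      rw [← Nat.card_eq_fintype_card]
      apply Nat.card_congr
      exact Equiv.subtypeEquivRight fun x =>
        (mem_maximalIdeal x).trans mem_nonunits_iff
    have h4 : Fintype.card {x : R // IsUnit x} ≤ Fintype.card R := Fintype.card_subtype_le _
    have h5 : Fintype.card R = q ^ (t + 1) := by rw [← Nat.card_eq_fintype_card, hR]
    have hsub : Nat.card Rˣ = q ^ (t + 1) - q ^ t := by omega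
    have : q ^ (t + 1) = q ^ t * d + q ^ t := by rw [pow_succ, hd]; ring
    rw [hsub, this, Nat.add_sub_cancel]
  -- cardinality of the Borel
  have hB : Nat.card (myBorel R) = (q ^ t * d) * ((q ^ t * d) * q ^ (t + 1)) := by
    rw [Nat.card_congr (borelEquiv R), Nat.card_prod, Nat.card_prod, hunits, hR]
  -- cardinality of GL₂ of the residue field
  have hGLk : Nat.card (GL (Fin 2) (ResidueField R)) = ((q + 1) * d) * (q * d) := by
    rw [Matrix.card_GL_field]
    rw [Fin.prod_univ_two]
    simp only [Fin.val_zero, Fin.val_one]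
    have e1 : Fintype.card (ResidueField R) ^ 2 - Fintype.card (ResidueField R) ^ (0 : ℕ) =
        (q + 1) * d := by
      rw [← hqcard, pow_zero]
      have : q ^ 2 = (q + 1) * d + 1 := by rw [hd]; ring
      rw [this, Nat.add_sub_cancel]
    have e2 : Fintype.card (ResidueField R) ^ 2 - Fintype.card (ResidueField R) ^ (1 : ℕ) =
        q * d := by
      rw [← hqcard, pow_one]
      have : q ^ 2 = q * d + q := by rw [hd]; ring
      rw [this, Nat.add_sub_cancel]
    rw [e1, e2]
  -- cardinality of the kernel
  have hker : Nat.card ((redGL R).ker) = (q ^ t) ^ 4 := by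
    rw [Nat.card_congr (kerEquiv R), Nat.card_fun, Nat.card_fun, hmcard,
      Nat.card_eq_fintype_card, Fintype.card_fin, ← pow_mul]
  -- cardinality of GL₂(R)
  have hGL : Nat.card (GL (Fin 2) R) = (((q + 1) * d) * (q * d)) * (q ^ t) ^ 4 := by
    rw [Subgroup.card_eq_card_quotient_mul_card_subgroup (redGL R).ker,
      Nat.card_congr (QuotientGroup.quotientKerEquivOfSurjective _ (redGL_surjective R)).toEquiv,
      hGLk, hker]
  -- conclude
  have hBpos : 0 < Nat.card (myBorel R) := Nat.card_pos
  have key : (myBorel R).index * Nat.card (myBorel R) = Nat.card (GL (Fin 2) R) :=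
    Subgroup.index_mul_card _
  have target : (q ^ t * (q + 1)) * Nat.card (myBorel R) = Nat.card (GL (Fin 2) R) := by
    rw [hB, hGL]
    ring
  have := key.trans target.symm
  exact Nat.eq_of_mul_eq_mul_right hBpos this
end
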